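/- Let P satisfy the Doeblin condition with constant a ∈ (0,1) and let f be bounded with |f|_* = inf_λ sup_x |f(x) − λ|. Then there exists a unique bounded solution ψ of the Poisson equation (P − I)ψ = μf − f, given by ψ = Σ_{k=0}^∞ P^k(f − μf), and it satisfies |ψ|_∞ ≤ 2|f|_*/a. -/

import Mathlib

/-!
Hahn-decomposing `P(x, ·) - P(y, ·)` shows that `P` contracts oscillation by the factor `1 - a`.
Since `P` preserves `μ`-means and a function of `μ`-mean zero is bounded by its oscillation, the
terms `Pᵏ(f - μf)` are bounded by `(1 - a)ᵏ · 2|f|_*`; their sum `ψ` obeys `|ψ| ≤ 2|f|_*/a`, and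
shifting the series by one term gives `Pψ - ψ = μf - f`. The difference of two such solutions with
mean zero is `P`-invariant with mean zero, so it is bounded by `(1 - a)ᵏ` times a constant for
every `k`, hence vanishes.
-/

open MeasureTheory ProbabilityTheory Filter
open scoped ENNReal

/-- Total variation distance between two measures. -/
noncomputable def tvDist {X : Type*} [MeasurableSpace X] (μ ν : Measure X) : ℝ :=
  ⨆ s : {s : Set X // MeasurableSet s}, |(μ s.1).toReal - (ν s.1).toReal|

/-- One step of a Markov kernel acting on a measure. -/
noncomputable def stepK {X : Type*} [MeasurableSpace X] (κ : Kernel X X) (ν : Measure X) :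
    Measure X :=
  ν.bind (fun x => κ x)

/-- `|f|_* = inf_λ sup_x |f x - λ|`. -/
noncomputable def fstar {X : Type*} (f : X → ℝ) : ℝ := ⨅ l : ℝ, ⨆ x, |f x - l|

section BoundedFunctions

variable {X : Type*} [MeasurableSpace X] {ν : Measure X} {g : X → ℝ} {M : ℝ}

lemma integrable_of_abs_le [IsFiniteMeasure ν] (hg : Measurable g) (hM : ∀ x, |g x| ≤ M) :
    Integrable g ν :=
  .of_bound hg.aestronglyMeasurable M (.of_forall fun x => (Real.norm_eq_abs _).trans_le (hM x))

lemma abs_integral_le_of_abs_le [IsProbabilityMeasure ν] (hM : ∀ x, |g x| ≤ M) :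
    |∫ x, g x ∂ν| ≤ M := by
  simpa using norm_integral_le_of_norm_le_const (μ := ν)
    (.of_forall fun x => (Real.norm_eq_abs _).trans_le (hM x))

lemma abs_le_of_integral_eq_zero [IsProbabilityMeasure ν] (hg : Integrable g ν)
    (h0 : ∫ x, g x ∂ν = 0) {E : ℝ} (hE : ∀ x y, |g x - g y| ≤ E) (x : X) : |g x| ≤ E := by
  have hmean : g x = ∫ y, (g x - g y) ∂ν := by
    rw [integral_sub (integrable_const _) hg, h0]
    simp
  rw [hmean]
  exact abs_integral_le_of_abs_le (hE x)

end BoundedFunctions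

lemma exists_abs_sub_le_half_of_abs_sub_le {X : Type*} {h : X → ℝ} {E : ℝ}
    (hE : ∀ x y, |h x - h y| ≤ E) : ∃ c, ∀ x, |h x - c| ≤ E / 2 := by
  rcases isEmpty_or_nonempty X with hX | ⟨⟨x₀⟩⟩
  · exact ⟨0, isEmptyElim⟩
  have : Nonempty X := ⟨x₀⟩
  have hbddA : BddAbove (Set.range h) :=
    ⟨h x₀ + E, by rintro _ ⟨x, rfl⟩; linarith [(abs_le.mp (hE x x₀)).2]⟩
  have hbddB : BddBelow (Set.range h) :=
    ⟨h x₀ - E, by rintro _ ⟨x, rfl⟩; linarith [(abs_le.mp (hE x₀ x)).2]⟩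
  have hsup : ⨆ x, h x ≤ (⨅ x, h x) + E := ciSup_le fun x => by
    have : h x - E ≤ ⨅ y, h y := le_ciInf fun y => by linarith [(abs_le.mp (hE x y)).2]
    linarith
  refine ⟨((⨆ x, h x) + ⨅ x, h x) / 2, fun x => abs_le.mpr ⟨?_, ?_⟩⟩ <;>
    linarith [le_ciSup hbddA x, ciInf_le hbddB x]

lemma abs_sub_le_two_mul_fstar {X : Type*} {f : X → ℝ} {C : ℝ} (hC : ∀ x, |f x| ≤ C)
    (x y : X) : |f x - f y| ≤ 2 * fstar f := by
  have hbdd (l : ℝ) : BddAbove (Set.range fun z => |f z - l|) :=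
    ⟨C + |l|, by rintro _ ⟨z, rfl⟩; linarith [abs_sub (f z) l, hC z]⟩
  have : |f x - f y| / 2 ≤ fstar f := le_ciInf fun l => by
    linarith [le_ciSup (hbdd l) x, le_ciSup (hbdd l) y, abs_sub_le (f x) l (f y),
      abs_sub_comm (f y) l]
  linarith

section TotalVariation

variable {X : Type*} [MeasurableSpace X]

lemma abs_integral_sub_integral_le_of_le {ρ ν : Measure X} [IsFiniteMeasure ν] (hρν : ρ ≤ ν)
    {g : X → ℝ} (hg : Measurable g) {M : ℝ} (hM : ∀ x, |g x| ≤ M) :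
    |∫ x, g x ∂ν - ∫ x, g x ∂ρ| ≤ M * (ν.real Set.univ - ρ.real Set.univ) := by
  have : IsFiniteMeasure ρ := isFiniteMeasure_of_le ν hρν
  have hmass : (ν - ρ).real Set.univ = ν.real Set.univ - ρ.real Set.univ := by
    rw [measureReal_def, Measure.sub_apply MeasurableSet.univ hρν,
      ENNReal.toReal_sub_of_le (hρν Set.univ) (measure_ne_top _ _)]
    rfl
  rw [← hmass]
  conv_lhs => rw [← Measure.sub_add_cancel_of_le hρν,
    integral_add_measure (integrable_of_abs_le hg hM) (integrable_of_abs_le hg hM),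
    add_sub_cancel_right]
  simpa using norm_integral_le_of_norm_le_const (μ := ν - ρ)
    (.of_forall fun x => (Real.norm_eq_abs _).trans_le (hM x))

lemma tvDist_comm (ν₁ ν₂ : Measure X) : tvDist ν₁ ν₂ = tvDist ν₂ ν₁ := by
  simp only [tvDist, abs_sub_comm]

variable (ν₁ ν₂ : Measure X) [IsProbabilityMeasure ν₁] [IsProbabilityMeasure ν₂]

lemma abs_measureReal_sub_le_tvDist {s : Set X} (hs : MeasurableSet s) :
    |ν₁.real s - ν₂.real s| ≤ tvDist ν₁ ν₂ := by
  refine le_ciSup (f := fun s : {s : Set X // MeasurableSet s} => |ν₁.real s - ν₂.real s|)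
    ⟨1, ?_⟩ ⟨s, hs⟩
  rintro _ ⟨t, rfl⟩
  have h₁ : ν₁.real t ≤ 1 := measureReal_le_one
  have h₂ : ν₂.real t ≤ 1 := measureReal_le_one
  have h₁' : 0 ≤ ν₁.real t := measureReal_nonneg
  have h₂' : 0 ≤ ν₂.real t := measureReal_nonneg
  exact abs_sub_le_iff.mpr ⟨by linarith, by linarith⟩

lemma abs_integral_sub_integral_le_two_mul_tvDist {g : X → ℝ} (hg : Measurable g) {M : ℝ}
    (hM : ∀ x, |g x| ≤ M) :
    |∫ x, g x ∂ν₁ - ∫ x, g x ∂ν₂| ≤ 2 * M * tvDist ν₁ ν₂ := by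
  have hM0 : 0 ≤ M := (abs_nonneg _).trans (abs_integral_le_of_abs_le (ν := ν₁) hM)
  obtain ⟨s, hs⟩ := exists_isHahnDecomposition ν₂ ν₁
  have hon := abs_integral_sub_integral_le_of_le hs.le_on hg hM
  have hoff := abs_integral_sub_integral_le_of_le hs.ge_on_compl hg hM
  simp only [measureReal_restrict_apply_univ] at hon hoff
  have hs₁ := le_of_abs_le (abs_measureReal_sub_le_tvDist ν₁ ν₂ hs.measurableSet)
  have hs₂ := le_of_abs_le (abs_measureReal_sub_le_tvDist ν₂ ν₁ hs.measurableSet.compl)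
  rw [tvDist_comm] at hs₂
  rw [← integral_add_compl hs.measurableSet (integrable_of_abs_le (ν := ν₁) hg hM),
    ← integral_add_compl hs.measurableSet (integrable_of_abs_le (ν := ν₂) hg hM)]
  calc _ ≤ |∫ x in s, g x ∂ν₁ - ∫ x in s, g x ∂ν₂|
          + |∫ x in sᶜ, g x ∂ν₂ - ∫ x in sᶜ, g x ∂ν₁| := by
        refine le_of_eq_of_le ?_ (abs_sub _ _)
        congr 1
        ring
    _ ≤ M * tvDist ν₁ ν₂ + M * tvDist ν₁ ν₂ := by
        gcongr
        · exact hon.trans (mul_le_mul_of_nonneg_left hs₁ hM0)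
        · exact hoff.trans (mul_le_mul_of_nonneg_left hs₂ hM0)
    _ = 2 * M * tvDist ν₁ ν₂ := by ring

lemma abs_integral_sub_integral_le_mul_tvDist {h : X → ℝ} (hh : Measurable h) {E : ℝ}
    (hE : ∀ x y, |h x - h y| ≤ E) :
    |∫ x, h x ∂ν₁ - ∫ x, h x ∂ν₂| ≤ E * tvDist ν₁ ν₂ := by
  obtain ⟨c, hc⟩ := exists_abs_sub_le_half_of_abs_sub_le hE
  have hg : Measurable fun x => h x - c := hh.sub measurable_const
  have hshift (ν : Measure X) [IsProbabilityMeasure ν] :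
      ∫ x, h x ∂ν = ∫ x, (h x - c) ∂ν + c := by
    have hhint : Integrable h ν :=
      ((integrable_of_abs_le hg hc).add (integrable_const c)).congr (.of_forall fun x => by simp)
    rw [integral_sub hhint (integrable_const c)]
    simp
  have := abs_integral_sub_integral_le_two_mul_tvDist ν₁ ν₂ hg hc
  rw [hshift ν₁, hshift ν₂, add_sub_add_right_eq_sub]
  rwa [mul_div_cancel₀ _ two_ne_zero] at this

end TotalVariation

noncomputable def markovOperator {X Y : Type*} [MeasurableSpace X] [MeasurableSpace Y]
    (κ : Kernel X Y) (g : Y → ℝ) : X → ℝ :=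
  fun x => ∫ y, g y ∂κ x

section MarkovOperator

variable {X Y : Type*} [MeasurableSpace X] [MeasurableSpace Y] {g : Y → ℝ}

lemma measurable_markovOperator (κ : Kernel X Y) [IsSFiniteKernel κ] (hg : Measurable g) :
    Measurable (markovOperator κ g) :=
  (hg.comp measurable_snd).stronglyMeasurable.integral_kernel_prod_right'.measurable

lemma abs_markovOperator_le (κ : Kernel X Y) [IsMarkovKernel κ] {M : ℝ} (hM : ∀ y, |g y| ≤ M)
    (x : X) : |markovOperator κ g x| ≤ M :=
  abs_integral_le_of_abs_le hM

lemma integral_comp_eq_integral_markovOperator (κ : Kernel X Y) [IsSFiniteKernel κ]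
    (μ : Measure X) [SFinite μ] (hg : Integrable g (κ ∘ₘ μ)) :
    ∫ y, g y ∂(κ ∘ₘ μ) = ∫ x, markovOperator κ g x ∂μ := by
  rw [← Measure.snd_compProd] at hg ⊢
  rw [Measure.snd, integral_map measurable_snd.aemeasurable hg.aestronglyMeasurable,
    Measure.integral_compProd (f := fun p => g p.2) (hg.comp_measurable measurable_snd)]
  rfl

lemma abs_markovOperator_sub_le {κ : Kernel X Y} [IsMarkovKernel κ] {r : ℝ}
    (hD : ∀ x x', tvDist (κ x) (κ x') ≤ r) (hg : Measurable g) {E : ℝ}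
    (hE : ∀ y y', |g y - g y'| ≤ E) (x x' : X) :
    |markovOperator κ g x - markovOperator κ g x'| ≤ r * E := by
  have := nonempty_of_isProbabilityMeasure (κ x)
  have hE0 : 0 ≤ E := by simpa using hE (Classical.arbitrary Y) (Classical.arbitrary Y)
  calc _ ≤ E * tvDist (κ x) (κ x') := abs_integral_sub_integral_le_mul_tvDist _ _ hg hE
    _ ≤ E * r := mul_le_mul_of_nonneg_left (hD x x') hE0
    _ = r * E := mul_comm _ _

end MarkovOperator

section Iterates

variable {X : Type*} [MeasurableSpace X] {κ : Kernel X X} [IsMarkovKernel κ] {g : X → ℝ}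

lemma measurable_iterate_markovOperator (hg : Measurable g) (k : ℕ) :
    Measurable ((markovOperator κ)^[k] g) := by
  induction k with
  | zero => exact hg
  | succ k ih => rw [Function.iterate_succ_apply']; exact measurable_markovOperator κ ih

lemma abs_iterate_markovOperator_le {M : ℝ} (hM : ∀ x, |g x| ≤ M) (k : ℕ) (x : X) :
    |(markovOperator κ)^[k] g x| ≤ M := by
  induction k generalizing x with
  | zero => exact hM x
  | succ k ih => rw [Function.iterate_succ_apply']; exact abs_markovOperator_le κ ih x

lemma abs_iterate_markovOperator_sub_le {r : ℝ} (hD : ∀ x y, tvDist (κ x) (κ y) ≤ r)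
    (hg : Measurable g) {E : ℝ} (hE : ∀ x y, |g x - g y| ≤ E) (k : ℕ) (x y : X) :
    |(markovOperator κ)^[k] g x - (markovOperator κ)^[k] g y| ≤ r ^ k * E := by
  induction k generalizing x y with
  | zero => simpa using hE x y
  | succ k ih =>
    rw [Function.iterate_succ_apply', pow_succ', mul_assoc]
    exact abs_markovOperator_sub_le hD (measurable_iterate_markovOperator hg k) ih x y

lemma integral_iterate_markovOperator {μ : Measure X} [IsProbabilityMeasure μ] (hμ : κ ∘ₘ μ = μ)
    (hg : Measurable g) {M : ℝ} (hM : ∀ x, |g x| ≤ M) (k : ℕ) :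
    ∫ x, (markovOperator κ)^[k] g x ∂μ = ∫ x, g x ∂μ := by
  induction k with
  | zero => rfl
  | succ k ih =>
    have hint : Integrable ((markovOperator κ)^[k] g) (κ ∘ₘ μ) := integrable_of_abs_le
      (measurable_iterate_markovOperator hg k) (abs_iterate_markovOperator_le hM k)
    rw [Function.iterate_succ_apply', ← integral_comp_eq_integral_markovOperator κ μ hint, hμ, ih]

lemma abs_iterate_markovOperator_le_of_integral_eq_zero {μ : Measure X} [IsProbabilityMeasure μ]
    (hμ : κ ∘ₘ μ = μ) {r : ℝ} (hD : ∀ x y, tvDist (κ x) (κ y) ≤ r) (hg : Measurable g) {M : ℝ}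
    (hM : ∀ x, |g x| ≤ M) (h0 : ∫ x, g x ∂μ = 0) {E : ℝ} (hE : ∀ x y, |g x - g y| ≤ E)
    (k : ℕ) (x : X) : |(markovOperator κ)^[k] g x| ≤ r ^ k * E :=
  abs_le_of_integral_eq_zero (integrable_of_abs_le
      (measurable_iterate_markovOperator hg k) (abs_iterate_markovOperator_le hM k))
    ((integral_iterate_markovOperator hμ hg hM k).trans h0)
    (abs_iterate_markovOperator_sub_le hD hg hE k) x

end Iterates

section Series

variable {X : Type*} [MeasurableSpace X] {F : ℕ → X → ℝ} {f : X → ℝ}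

lemma measurable_of_hasSum (hF : ∀ n, Measurable (F n)) (hf : ∀ x, HasSum (F · x) (f x)) :
    Measurable f :=
  measurable_of_tendsto_metrizable (fun n => Finset.measurable_sum _ fun k _ => hF k)
    (tendsto_pi_nhds.mpr fun x => by simpa using (hf x).tendsto_sum_nat)

lemma hasSum_integral_of_abs_le {ν : Measure X} [IsFiniteMeasure ν] (hF : ∀ n, Measurable (F n))
    {b : ℕ → ℝ} (hb : Summable b) (hFb : ∀ n x, |F n x| ≤ b n)
    (hf : ∀ x, HasSum (F · x) (f x)) :
    HasSum (fun n => ∫ x, F n x ∂ν) (∫ x, f x ∂ν) :=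
  hasSum_integral_of_dominated_convergence (fun n _ => b n) (fun n => (hF n).aestronglyMeasurable)
    (fun n => .of_forall fun x => (Real.norm_eq_abs _).trans_le (hFb n x))
    (.of_forall fun _ => hb) (integrable_const _) (.of_forall hf)

end Series

section Poisson

variable {X : Type*} [MeasurableSpace X] {κ : Kernel X X} [IsMarkovKernel κ]

lemma markovOperator_sub_self_of_hasSum {g : X → ℝ} (hg : Measurable g) {b : ℕ → ℝ}
    (hb : Summable b) (hgb : ∀ k x, |(markovOperator κ)^[k] g x| ≤ b k) {ψ : X → ℝ}
    (hψ : ∀ x, HasSum (fun k => (markovOperator κ)^[k] g x) (ψ x)) (x : X) :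
    markovOperator κ ψ x - ψ x = -g x := by
  have hshifted : HasSum (fun k => (markovOperator κ)^[k + 1] g x) (markovOperator κ ψ x) := by
    simp only [Function.iterate_succ_apply']
    exact hasSum_integral_of_abs_le (measurable_iterate_markovOperator hg) hb hgb hψ
  have htail := (hasSum_nat_add_iff' 1).mpr (hψ x)
  simp only [Finset.range_one, Finset.sum_singleton, Function.iterate_zero_apply] at htail
  linarith [hshifted.unique htail]

variable {μ : Measure X} [IsProbabilityMeasure μ] {r : ℝ}

lemma eq_zero_of_markovOperator_eq_self (hμ : κ ∘ₘ μ = μ) (hr0 : 0 ≤ r) (hr : r < 1)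
    (hD : ∀ x y, tvDist (κ x) (κ y) ≤ r) {h : X → ℝ} (hh : Measurable h) {M : ℝ}
    (hM : ∀ x, |h x| ≤ M) (h0 : ∫ x, h x ∂μ = 0) (hfix : markovOperator κ h = h) : h = 0 := by
  have hosc (x y : X) : |h x - h y| ≤ 2 * M := by linarith [abs_sub (h x) (h y), hM x, hM y]
  funext x
  have hdecay (k : ℕ) : |h x| ≤ r ^ k * (2 * M) := by
    simpa [Function.iterate_fixed hfix k] using
      abs_iterate_markovOperator_le_of_integral_eq_zero hμ hD hh hM h0 hosc k x
  have hlim : Tendsto (fun k : ℕ => r ^ k * (2 * M)) atTop (nhds 0) := by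
    simpa using (tendsto_pow_atTop_nhds_zero_of_lt_one hr0 hr).mul_const (2 * M)
  exact abs_nonpos_iff.mp (ge_of_tendsto' hlim hdecay)

lemma eq_of_markovOperator_sub_self_eq (hμ : κ ∘ₘ μ = μ) (hr0 : 0 ≤ r) (hr : r < 1)
    (hD : ∀ x y, tvDist (κ x) (κ y) ≤ r) {φ₁ φ₂ : X → ℝ} (hφ₁ : Measurable φ₁)
    (hφ₂ : Measurable φ₂) {M₁ M₂ : ℝ} (hM₁ : ∀ x, |φ₁ x| ≤ M₁) (hM₂ : ∀ x, |φ₂ x| ≤ M₂)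
    (hmean : ∫ x, φ₁ x ∂μ = ∫ x, φ₂ x ∂μ)
    (heq : ∀ x, markovOperator κ φ₁ x - φ₁ x = markovOperator κ φ₂ x - φ₂ x) : φ₁ = φ₂ := by
  have hM (x : X) : |(φ₁ - φ₂) x| ≤ M₁ + M₂ := by
    linarith [Pi.sub_apply φ₁ φ₂ x ▸ abs_sub (φ₁ x) (φ₂ x), hM₁ x, hM₂ x]
  have h0 : ∫ x, (φ₁ - φ₂) x ∂μ = 0 := by
    rw [Pi.sub_def, integral_sub (integrable_of_abs_le hφ₁ hM₁) (integrable_of_abs_le hφ₂ hM₂),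
      hmean, sub_self]
  have hfix : markovOperator κ (φ₁ - φ₂) = φ₁ - φ₂ := funext fun x => by
    have := heq x
    simp only [markovOperator, Pi.sub_apply] at this ⊢
    rw [integral_sub (integrable_of_abs_le hφ₁ hM₁) (integrable_of_abs_le hφ₂ hM₂)]
    linarith
  exact sub_eq_zero.mp (eq_zero_of_markovOperator_eq_self hμ hr0 hr hD (hφ₁.sub hφ₂) hM h0 hfix)

end Poisson

theorem poisson_equation_solution_general {X : Type*} [MeasurableSpace X]
    (κ : Kernel X X) [IsMarkovKernel κ] (a : ℝ) (ha : a ∈ Set.Ioo (0:ℝ) 1)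
    (hD : ∀ x y : X, tvDist (κ x) (κ y) ≤ 1 - a)
    (μ : Measure X) [IsProbabilityMeasure μ] (hμ : stepK κ μ = μ)
    (f : X → ℝ) (hf : Measurable f) (C : ℝ) (hC : ∀ x, |f x| ≤ C) :
    ∃ ψ : X → ℝ,
      (Measurable ψ ∧ (∃ D, ∀ x, |ψ x| ≤ D) ∧ (∫ x, ψ x ∂μ) = 0 ∧
        (∀ x, (∫ y, ψ y ∂(κ x)) - ψ x = (∫ y, f y ∂μ) - f x)) ∧
      (∀ x, |ψ x| ≤ 2 * fstar f / a) ∧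
      (∀ x, HasSum (fun k : ℕ =>
          ((fun g : X → ℝ => fun z => ∫ y, g y ∂(κ z))^[k]
            (fun y => f y - ∫ y, f y ∂μ)) x) (ψ x)) ∧
      ∀ ψ' : X → ℝ, Measurable ψ' → (∃ D, ∀ x, |ψ' x| ≤ D) → (∫ x, ψ' x ∂μ) = 0 →
        (∀ x, (∫ y, ψ' y ∂(κ x)) - ψ' x = (∫ y, f y ∂μ) - f x) → ψ' = ψ := by
  obtain ⟨ha0, ha1⟩ := ha
  change κ ∘ₘ μ = μ at hμ
  set g : X → ℝ := fun y => f y - ∫ y, f y ∂μ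
  have hg : Measurable g := hf.sub measurable_const
  have hg0 : ∫ x, g x ∂μ = 0 := by
    simp [g, integral_sub (integrable_of_abs_le hf hC) (integrable_const _)]
  have hgM (x : X) : |g x| ≤ 2 * C := by
    linarith [abs_sub (f x) (∫ y, f y ∂μ), abs_integral_le_of_abs_le (ν := μ) hC, hC x]
  have hgosc (x y : X) : |g x - g y| ≤ 2 * fstar f := by
    simpa [g] using abs_sub_le_two_mul_fstar hC x y
  have hdecay := abs_iterate_markovOperator_le_of_integral_eq_zero hμ hD hg hgM hg0 hgosc
  have hgeom : HasSum (fun k : ℕ => (1 - a) ^ k * (2 * fstar f)) (2 * fstar f / a) := by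
    simpa [div_eq_inv_mul] using
      (hasSum_geometric_of_lt_one (by linarith) (by linarith : 1 - a < 1)).mul_right (2 * fstar f)
  set ψ : X → ℝ := fun x => ∑' k, (markovOperator κ)^[k] g x
  have hψ (x : X) : HasSum (fun k => (markovOperator κ)^[k] g x) (ψ x) :=
    (Summable.of_norm_bounded hgeom.summable (hdecay · x)).hasSum
  have hψM (x : X) : |ψ x| ≤ 2 * fstar f / a :=
    tsum_of_norm_bounded (f := fun k => (markovOperator κ)^[k] g x) hgeom (hdecay · x)
  have hψmeas : Measurable ψ := measurable_of_hasSum (measurable_iterate_markovOperator hg) hψ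
  have hψ0 : ∫ x, ψ x ∂μ = 0 := by
    refine (hasSum_integral_of_abs_le (measurable_iterate_markovOperator hg) hgeom.summable
      hdecay hψ).unique ?_
    simp [integral_iterate_markovOperator hμ hg hgM, hg0]
  have hψeq (x : X) : markovOperator κ ψ x - ψ x = ∫ y, f y ∂μ - f x := by
    rw [markovOperator_sub_self_of_hasSum hg hgeom.summable hdecay hψ x, neg_sub]
  refine ⟨ψ, ⟨hψmeas, ⟨_, hψM⟩, hψ0, hψeq⟩, hψM, hψ, fun ψ' hψ'meas ⟨D, hψ'M⟩ hψ'0 hψ'eq => ?_⟩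
  exact eq_of_markovOperator_sub_self_eq hμ (by linarith) (by linarith) hD hψ'meas hψmeas hψ'M
    hψM (hψ'0.trans hψ0.symm) fun x => (hψ'eq x).trans (hψeq x).symm

theorem poisson_equation_solution {X : Type*} [TopologicalSpace X] [PolishSpace X]
    [MeasurableSpace X] [BorelSpace X] [Nonempty X]
    (κ : Kernel X X) [IsMarkovKernel κ] (a : ℝ) (ha : a ∈ Set.Ioo (0:ℝ) 1)
    (hD : ∀ x y : X, tvDist (κ x) (κ y) ≤ 1 - a)
    (μ : Measure X) [IsProbabilityMeasure μ] (hμ : stepK κ μ = μ)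
    (f : X → ℝ) (hf : Measurable f) (C : ℝ) (hC : ∀ x, |f x| ≤ C) :
    ∃ ψ : X → ℝ,
      (Measurable ψ ∧ (∃ D, ∀ x, |ψ x| ≤ D) ∧ (∫ x, ψ x ∂μ) = 0 ∧
        (∀ x, (∫ y, ψ y ∂(κ x)) - ψ x = (∫ y, f y ∂μ) - f x)) ∧
      (∀ x, |ψ x| ≤ 2 * fstar f / a) ∧
      (∀ x, HasSum (fun k : ℕ =>
          ((fun g : X → ℝ => fun z => ∫ y, g y ∂(κ z))^[k]
            (fun y => f y - ∫ y, f y ∂μ)) x) (ψ x)) ∧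
      ∀ ψ' : X → ℝ, Measurable ψ' → (∃ D, ∀ x, |ψ' x| ≤ D) → (∫ x, ψ' x ∂μ) = 0 →
        (∀ x, (∫ y, ψ' y ∂(κ x)) - ψ' x = (∫ y, f y ∂μ) - f x) → ψ' = ψ :=
  poisson_equation_solution_general κ a ha hD μ hμ f hf C hC
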